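/- arXiv:math/0406434 — 3 statements merged into one kernel-verified Lean document; each statement's English description precedes it below -/
import Mathlib

section
/- An element π ∈ H₍₁,₂,₂₎ is a prime of H₍₁,₂,₂₎ if and only if N(π) is a rational prime. -/
/-!
`N(q) = q q̄` is multiplicative and integral on `H₍₁,₂,₂₎`, so the units are the elements of
norm `1` and elements of prime norm are prime.

Conversely, every quaternion lies within norm `3/4` of `H₍₁,₂,₂₎`, so the order is left
norm-Euclidean: for a prime `p ∣ N(π)` the left ideal `Hπ + Hp` is generated by a common right
divisor `δ`. If `π = αδ` with `α` a unit, then `N(π) ∣ N(p) = p²`, so `N(π) = p` or `δ` is `p` up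
to a unit; if `δ` is a unit, then `1 ∈ Hπ + Hp`, hence `π̄ ∈ pH`. Thus either `N(π) = p` or
`π = g p`, and the latter is not prime: `p = x x̄` for some `x ∈ H₍₁,₂,₂₎` (`H₍₁,₂,₂₎` contains
`ℤ + ℤi + √2ℤj + √2ℤk`, whose norm form `a² + b² + 2z² + 2w²` is universal), so `π = (g x) x̄` is a product of non-units.
-/

open Quaternion

noncomputable section

/-- `v₁ = 1` -/
def v₁ : ℍ[ℝ] := 1

/-- `v₂ = i` -/
def v₂ : ℍ[ℝ] := ⟨0, 1, 0, 0⟩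

/-- `v₃ = (1 + i + √2·j)/2` -/
def v₃ : ℍ[ℝ] := ⟨1/2, 1/2, Real.sqrt 2 / 2, 0⟩

/-- `v₄ = (1 + i + √2·k)/2` -/
def v₄ : ℍ[ℝ] := ⟨1/2, 1/2, 0, Real.sqrt 2 / 2⟩

/-- The quaternion order `H₍₁,₂,₂₎`: the ℤ-span of `{v₁, v₂, v₃, v₄}`. -/
def H122 : Set ℍ[ℝ] :=
  {q | ∃ a b c d : ℤ, q = a • v₁ + b • v₂ + c • v₃ + d • v₄}

/-- A unit of `H₍₁,₂,₂₎`: an element with a two-sided inverse in `H₍₁,₂,₂₎`. -/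
def IsUnitH (u : ℍ[ℝ]) : Prop :=
  u ∈ H122 ∧ ∃ v ∈ H122, u * v = 1 ∧ v * u = 1

/-- A prime of `H₍₁,₂,₂₎`: a nonzero nonunit such that in any factorization within
`H₍₁,₂,₂₎` one of the factors is a unit. -/
def IsPrimeH (q : ℍ[ℝ]) : Prop :=
  q ∈ H122 ∧ q ≠ 0 ∧ ¬ IsUnitH q ∧
    ∀ a ∈ H122, ∀ b ∈ H122, q = a * b → IsUnitH a ∨ IsUnitH b

theorem Real.sqrt_two_mul_self : √2 * √2 = 2 := Real.mul_self_sqrt zero_le_two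

theorem Nat.Prime.eq_or_eq_one_of_sq_eq_mul {p b n : ℕ} (hp : p.Prime) (h : p ^ 2 = b * n)
    (hn : n ≠ 1) : n = p ∨ b = 1 := by
  obtain ⟨k, hk, rfl⟩ := (Nat.dvd_prime_pow hp).mp (Dvd.intro_left b h.symm)
  interval_cases k
  · exact absurd (pow_zero p) hn
  · exact .inl (pow_one p)
  · exact .inr (Nat.eq_of_mul_eq_mul_right (pow_pos hp.pos 2) (by rw [one_mul, ← h])).symm

namespace H122

def ofCoords (a b c d : ℤ) : ℍ[ℝ] := a • v₁ + b • v₂ + c • v₃ + d • v₄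

theorem mem_iff {q : ℍ[ℝ]} : q ∈ H122 ↔ ∃ a b c d : ℤ, q = ofCoords a b c d := Iff.rfl

theorem ofCoords_mem (a b c d : ℤ) : ofCoords a b c d ∈ H122 := ⟨a, b, c, d, rfl⟩

@[simp] theorem re_ofCoords (a b c d : ℤ) : (ofCoords a b c d).re = a + (c + d) / 2 := by
  simp only [ofCoords, zsmul_eq_mul, re_add, re_mul, re_intCast, imI_intCast, imJ_intCast,
    imK_intCast]
  simp only [v₁, v₂, v₃, v₄, re_one]
  ring

@[simp] theorem imI_ofCoords (a b c d : ℤ) : (ofCoords a b c d).imI = b + (c + d) / 2 := by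
  simp only [ofCoords, zsmul_eq_mul, imI_add, imI_mul, re_intCast, imI_intCast, imJ_intCast,
    imK_intCast]
  simp only [v₁, v₂, v₃, v₄, imI_one]
  ring

@[simp] theorem imJ_ofCoords (a b c d : ℤ) : (ofCoords a b c d).imJ = √2 * c / 2 := by
  simp only [ofCoords, zsmul_eq_mul, imJ_add, imJ_mul, re_intCast, imI_intCast, imJ_intCast,
    imK_intCast]
  simp only [v₁, v₂, v₃, v₄, imJ_one]
  ring

@[simp] theorem imK_ofCoords (a b c d : ℤ) : (ofCoords a b c d).imK = √2 * d / 2 := by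
  simp only [ofCoords, zsmul_eq_mul, imK_add, imK_mul, re_intCast, imI_intCast, imJ_intCast,
    imK_intCast]
  simp only [v₁, v₂, v₃, v₄, imK_one]
  ring

theorem ofCoords_mul (a b c d A B C D : ℤ) : ofCoords a b c d * ofCoords A B C D =
    ofCoords (a*A - b*B - b*C - c*C - d*B - d*C - d*D) (a*B + b*A + b*D + c*B + c*D - d*C)
      (a*C - b*D + c*A + c*C + d*B + d*C) (a*D + b*C - c*B + d*A + d*C + d*D) := by
  ext <;> simp only [re_mul, imI_mul, imJ_mul, imK_mul, re_ofCoords, imI_ofCoords, imJ_ofCoords,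
    imK_ofCoords] <;> push_cast
  · linear_combination (-(c * C + d * D : ℝ) / 4) * Real.sqrt_two_mul_self
  · linear_combination ((c * D - d * C : ℝ) / 4) * Real.sqrt_two_mul_self
  · ring
  · ring

theorem star_ofCoords (a b c d : ℤ) :
    star (ofCoords a b c d) = ofCoords (a + c + d) (-b) (-c) (-d) := by
  ext <;> simp only [re_star, imI_star, imJ_star, imK_star, re_ofCoords, imI_ofCoords,
    imJ_ofCoords, imK_ofCoords] <;> push_cast <;> ring

theorem normSq_ofCoords (a b c d : ℤ) : normSq (ofCoords a b c d) =
    ((a^2 + b^2 + c^2 + d^2 + a*c + a*d + b*c + b*d + c*d : ℤ) : ℝ) := by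
  rw [normSq_def']
  simp only [re_ofCoords, imI_ofCoords, imJ_ofCoords, imK_ofCoords]
  push_cast
  linear_combination ((c^2 + d^2 : ℝ) / 4) * Real.sqrt_two_mul_self

def subring : Subring ℍ[ℝ] where
  carrier := H122
  mul_mem' := by
    rintro _ _ ⟨a, b, c, d, rfl⟩ ⟨A, B, C, D, rfl⟩
    exact ofCoords_mul a b c d A B C D ▸ ofCoords_mem _ _ _ _
  one_mem' := ⟨1, 0, 0, 0, by simp [v₁]⟩
  add_mem' := by
    rintro _ _ ⟨a, b, c, d, rfl⟩ ⟨A, B, C, D, rfl⟩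
    exact ⟨a + A, b + B, c + C, d + D, by simp only [add_zsmul]; abel⟩
  zero_mem' := ⟨0, 0, 0, 0, by simp⟩
  neg_mem' := by
    rintro _ ⟨a, b, c, d, rfl⟩
    exact ⟨-a, -b, -c, -d, by simp only [neg_zsmul]; abel⟩

theorem star_mem {q : ℍ[ℝ]} (hq : q ∈ H122) : star q ∈ H122 := by
  obtain ⟨a, b, c, d, rfl⟩ := mem_iff.mp hq
  exact star_ofCoords a b c d ▸ ofCoords_mem _ _ _ _

theorem exists_normSq_eq_natCast {q : ℍ[ℝ]} (hq : q ∈ H122) : ∃ n : ℕ, normSq q = n := by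
  obtain ⟨a, b, c, d, rfl⟩ := mem_iff.mp hq
  rw [normSq_ofCoords]
  lift a^2 + b^2 + c^2 + d^2 + a*c + a*d + b*c + b*d + c*d to ℕ with n hn
  · exact_mod_cast normSq_ofCoords a b c d ▸ normSq_nonneg
  · exact ⟨n, mod_cast rfl⟩

/-- `N` as a natural number: a floor, so meaningful only on `H₍₁,₂,₂₎`, where `normSq` is
integral. -/
def normNat (q : ℍ[ℝ]) : ℕ := ⌊normSq q⌋₊

theorem normSq_eq_normNat {q : ℍ[ℝ]} (hq : q ∈ H122) : normSq q = normNat q := by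
  obtain ⟨n, hn⟩ := exists_normSq_eq_natCast hq
  rw [normNat, hn, Nat.floor_natCast]

theorem natCast_inj {m n : ℕ} : (m : ℍ[ℝ]) = n ↔ m = n := by
  rw [← coe_natCast, ← coe_natCast, coe_inj, Nat.cast_inj]

theorem mul_star_eq_normNat {q : ℍ[ℝ]} (hq : q ∈ H122) : q * star q = normNat q := by
  rw [self_mul_star, normSq_eq_normNat hq]; rfl

theorem normNat_mul {x y : ℍ[ℝ]} (hx : x ∈ H122) (hy : y ∈ H122) :
    normNat (x * y) = normNat x * normNat y := by
  have := normSq_eq_normNat (subring.mul_mem hx hy)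
  rw [map_mul, normSq_eq_normNat hx, normSq_eq_normNat hy] at this
  exact_mod_cast this.symm

@[simp] theorem normNat_one : normNat 1 = 1 := by simp [normNat]

theorem normNat_natCast (n : ℕ) : normNat n = n ^ 2 := by
  rw [normNat, normSq_natCast, ← Nat.cast_pow, Nat.floor_natCast]

theorem normNat_star (q : ℍ[ℝ]) : normNat (star q) = normNat q := by
  rw [normNat, normSq_star, normNat]

theorem normNat_eq_zero {q : ℍ[ℝ]} (hq : q ∈ H122) : normNat q = 0 ↔ q = 0 := by
  rw [← normSq_eq_zero, normSq_eq_normNat hq, Nat.cast_eq_zero]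

theorem star_mul_self_eq_one {q : ℍ[ℝ]} (hq : q ∈ H122) (h : normNat q = 1) :
    star q * q = 1 := by
  rw [star_mul_self, normSq_eq_normNat hq, h, Nat.cast_one, coe_one]

theorem isUnitH_iff_normNat_eq_one {q : ℍ[ℝ]} (hq : q ∈ H122) : IsUnitH q ↔ normNat q = 1 := by
  refine ⟨fun ⟨_, v, hv, hqv, _⟩ ↦ ?_, fun h ↦ ⟨hq, star q, star_mem hq, ?_, ?_⟩⟩
  · have := congrArg normNat hqv
    rw [normNat_mul hq hv, normNat_one] at this
    exact Nat.eq_one_of_mul_eq_one_right this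
  · rw [self_mul_star, normSq_eq_normNat hq, h, Nat.cast_one, coe_one]
  · exact star_mul_self_eq_one hq h

theorem sq_sub_round_le (x : ℝ) : (x - round x) ^ 2 ≤ 1 / 4 := by
  have h := abs_sub_round x
  nlinarith [abs_nonneg (x - round x), sq_abs (x - round x)]

/-- Round the `v₃, v₄` coordinates first, then the `v₁, v₂` ones. -/
theorem exists_normSq_sub_le (ξ : ℍ[ℝ]) : ∃ q ∈ H122, normSq (ξ - q) ≤ 3 / 4 := by
  set c := round (√2 * ξ.imJ)
  set d := round (√2 * ξ.imK)
  set a := round (ξ.re - (c + d) / 2)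
  set b := round (ξ.imI - (c + d) / 2)
  refine ⟨ofCoords a b c d, ofCoords_mem a b c d, ?_⟩
  have hJ : 2 * (ξ.imJ - √2 * c / 2) ^ 2 = (√2 * ξ.imJ - c) ^ 2 := by
    linear_combination ((c : ℝ) ^ 2 / 2 - ξ.imJ ^ 2) * Real.sqrt_two_mul_self
  have hK : 2 * (ξ.imK - √2 * d / 2) ^ 2 = (√2 * ξ.imK - d) ^ 2 := by
    linear_combination ((d : ℝ) ^ 2 / 2 - ξ.imK ^ 2) * Real.sqrt_two_mul_self
  have := sq_sub_round_le (√2 * ξ.imJ)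
  have := sq_sub_round_le (√2 * ξ.imK)
  have := sq_sub_round_le (ξ.re - (c + d) / 2)
  have := sq_sub_round_le (ξ.imI - (c + d) / 2)
  rw [normSq_def']
  simp only [re_sub, imI_sub, imJ_sub, imK_sub, re_ofCoords, imI_ofCoords, imJ_ofCoords,
    imK_ofCoords]
  linarith

theorem exists_normSq_sub_mul_lt (x : ℍ[ℝ]) {y : ℍ[ℝ]} (hy : y ≠ 0) :
    ∃ q ∈ H122, normSq (x - q * y) < normSq y := by
  obtain ⟨q, hq, hle⟩ := exists_normSq_sub_le (x * y⁻¹)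
  refine ⟨q, hq, ?_⟩
  have hy' : 0 < normSq y := normSq_nonneg.lt_of_ne (normSq_ne_zero.mpr hy).symm
  calc normSq (x - q * y) = normSq (x * y⁻¹ - q) * normSq y := by
        rw [← map_mul, sub_mul, inv_mul_cancel_right₀ hy]
    _ < normSq y := by nlinarith

theorem exists_sq_add_sq_eq_two_mul_sq_add_two_mul_sq {x y : ℤ} (h : Even (x - y)) :
    ∃ z w : ℤ, x ^ 2 + y ^ 2 = 2 * z ^ 2 + 2 * w ^ 2 := by
  obtain ⟨t, ht⟩ := h
  exact ⟨y + t, t, by rw [show x = y + 2 * t by linarith]; ring⟩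

/-- Of four squares summing to `n`, two have arguments of the same parity, and those two
combine into `2z² + 2w²`. -/
theorem exists_eq_sq_add_sq_add_two_mul_sq_add_two_mul_sq (n : ℕ) :
    ∃ a b z w : ℤ, n = a ^ 2 + b ^ 2 + 2 * z ^ 2 + 2 * w ^ 2 := by
  obtain ⟨a, b, c, d, h⟩ := Nat.sum_four_squares n
  have h' : (n : ℤ) = (a : ℤ) ^ 2 + (b : ℤ) ^ 2 + (c : ℤ) ^ 2 + (d : ℤ) ^ 2 := by
    exact_mod_cast h.symm
  by_cases hab : Even ((a : ℤ) - b)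
  · obtain ⟨z, w, hzw⟩ := exists_sq_add_sq_eq_two_mul_sq_add_two_mul_sq hab
    exact ⟨c, d, z, w, by linarith⟩
  by_cases hac : Even ((a : ℤ) - c)
  · obtain ⟨z, w, hzw⟩ := exists_sq_add_sq_eq_two_mul_sq_add_two_mul_sq hac
    exact ⟨b, d, z, w, by linarith⟩
  have hbc : Even ((b : ℤ) - c) := by rw [Int.even_sub] at *; tauto
  obtain ⟨z, w, hzw⟩ := exists_sq_add_sq_eq_two_mul_sq_add_two_mul_sq hbc
  exact ⟨a, d, z, w, by linarith⟩

theorem exists_mem_normNat_eq (n : ℕ) : ∃ x ∈ H122, normNat x = n := by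
  obtain ⟨a, b, z, w, h⟩ := exists_eq_sq_add_sq_add_two_mul_sq_add_two_mul_sq n
  refine ⟨ofCoords (a - z - w) (b - z - w) (2 * z) (2 * w), ofCoords_mem _ _ _ _, ?_⟩
  rw [normNat, normSq_ofCoords, ← Nat.floor_natCast (R := ℝ) n, ← Int.cast_natCast, h]
  ring_nf

theorem not_isPrimeH_mul_natCast {g : ℍ[ℝ]} (hg : g ∈ H122) {n : ℕ} (hn : n ≠ 1) :
    ¬ IsPrimeH (g * n) := by
  rintro ⟨-, -, -, hfac⟩
  obtain ⟨x, hx, hxn⟩ := exists_mem_normNat_eq n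
  have hgx := subring.mul_mem hg hx
  have hsplit : g * n = g * x * star x := by rw [mul_assoc, mul_star_eq_normNat hx, hxn]
  rcases hfac _ hgx _ (star_mem hx) hsplit with h | h
  · rw [isUnitH_iff_normNat_eq_one hgx, normNat_mul hg hx, hxn] at h
    exact hn (Nat.eq_one_of_mul_eq_one_left h)
  · rw [isUnitH_iff_normNat_eq_one (star_mem hx), normNat_star, hxn] at h
    exact hn h

theorem exists_right_gcd {x y : ℍ[ℝ]} (hx : x ∈ H122) (hy : y ∈ H122) (hy0 : y ≠ 0) :
    ∃ μ ∈ H122, ∃ ν ∈ H122,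
      (∃ α ∈ H122, x = α * (μ * x + ν * y)) ∧ ∃ β ∈ H122, y = β * (μ * x + ν * y) := by
  set L := {z | ∃ μ ∈ H122, ∃ ν ∈ H122, z = μ * x + ν * y}
  have hLH : L ⊆ H122 := by
    rintro _ ⟨μ, hμ, ν, hν, rfl⟩
    exact subring.add_mem (subring.mul_mem hμ hx) (subring.mul_mem hν hy)
  have hL : ∀ z ∈ L, ∀ w ∈ L, ∀ q ∈ H122, z - q * w ∈ L := by
    rintro _ ⟨μ, hμ, ν, hν, rfl⟩ _ ⟨μ', hμ', ν', hν', rfl⟩ q hq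
    exact ⟨μ - q * μ', subring.sub_mem hμ (subring.mul_mem hq hμ'),
      ν - q * ν', subring.sub_mem hν (subring.mul_mem hq hν'), by noncomm_ring⟩
  have hxL : x ∈ L := ⟨1, subring.one_mem, 0, subring.zero_mem, by simp⟩
  have hyL : y ∈ L := ⟨0, subring.zero_mem, 1, subring.one_mem, by simp⟩
  obtain ⟨δ, ⟨hδL, hδ0⟩, hmin⟩ :=
    exists_minimalFor_of_wellFoundedLT (fun z ↦ z ∈ L ∧ z ≠ 0) normNat ⟨y, hyL, hy0⟩
  have hdvd : ∀ z ∈ L, ∃ q ∈ H122, z = q * δ := by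
    intro z hz
    obtain ⟨q, hq, hlt⟩ := exists_normSq_sub_mul_lt z hδ0
    refine ⟨q, hq, sub_eq_zero.mp (by_contra fun h ↦ ?_)⟩
    have hr := hL z hz δ hδL q hq
    rw [normSq_eq_normNat (hLH hr), normSq_eq_normNat (hLH hδL), Nat.cast_lt] at hlt
    exact hlt.not_ge (hmin ⟨hr, h⟩ hlt.le)
  obtain ⟨μ, hμ, ν, hν, rfl⟩ := hδL
  exact ⟨μ, hμ, ν, hν, hdvd x hxL, hdvd y hyL⟩

theorem exists_eq_mul_natCast_of_mul_add_mul_eq_one {π μ ν : ℍ[ℝ]} (hπ : π ∈ H122)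
    (hμ : μ ∈ H122) (hν : ν ∈ H122) {p : ℕ} (hp : p ∣ normNat π) (h : μ * π + ν * p = 1) :
    ∃ g ∈ H122, π = g * p := by
  obtain ⟨k, hk⟩ := hp
  obtain ⟨γ, hγ, hstar⟩ : ∃ γ ∈ H122, star π = γ * p := by
    refine ⟨μ * k + ν * star π, subring.add_mem (subring.mul_mem hμ (natCast_mem subring k))
      (subring.mul_mem hν (star_mem hπ)), ?_⟩
    calc star π = (μ * π + ν * p) * star π := by rw [h, one_mul]
      _ = μ * (π * star π) + ν * star π * p := by
        rw [add_mul, mul_assoc, mul_assoc, mul_assoc, (Nat.cast_commute p _).eq]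
      _ = (μ * k + ν * star π) * p := by
        rw [mul_star_eq_normNat hπ, hk, Nat.cast_mul, (Nat.cast_commute p _).eq]
        noncomm_ring
  refine ⟨star γ, star_mem hγ, ?_⟩
  rw [← star_star π, hstar, star_mul, star_natCast, (Nat.cast_commute p _).eq]

theorem isPrimeH_of_prime_normNat {π : ℍ[ℝ]} (hπ : π ∈ H122) (hp : (normNat π).Prime) :
    IsPrimeH π := by
  refine ⟨hπ, fun h ↦ hp.ne_zero ((normNat_eq_zero hπ).mpr h),
    fun h ↦ hp.ne_one ((isUnitH_iff_normNat_eq_one hπ).mp h), ?_⟩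
  rintro a ha b hb rfl
  rw [normNat_mul ha hb, Nat.prime_mul_iff] at hp
  rw [isUnitH_iff_normNat_eq_one ha, isUnitH_iff_normNat_eq_one hb]
  tauto

theorem prime_normNat_of_isPrimeH {π : ℍ[ℝ]} (hprime : IsPrimeH π) : (normNat π).Prime := by
  have ⟨hπ, _, hπu, hfac⟩ := hprime
  have hn1 : normNat π ≠ 1 := fun h ↦ hπu ((isUnitH_iff_normNat_eq_one hπ).mpr h)
  obtain ⟨p, hp, hpn⟩ := Nat.exists_prime_and_dvd hn1
  have hpH : (p : ℍ[ℝ]) ∈ H122 := natCast_mem subring p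
  obtain ⟨μ, hμ, ν, hν, ⟨α, hα, hπα⟩, β, hβ, hpβ⟩ :=
    exists_right_gcd hπ hpH fun h ↦ hp.ne_zero (natCast_inj.mp (h.trans Nat.cast_zero.symm))
  set δ := μ * π + ν * p
  have hδ : δ ∈ H122 := subring.add_mem (subring.mul_mem hμ hπ) (subring.mul_mem hν hpH)
  rcases hfac α hα δ hδ hπα with hαu | hδu
  · have hp2 : p ^ 2 = normNat β * normNat π := by
      rw [← normNat_natCast, hpβ, normNat_mul hβ hδ, hπα, normNat_mul hα hδ,
        (isUnitH_iff_normNat_eq_one hα).mp hαu, one_mul]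
    rcases hp.eq_or_eq_one_of_sq_eq_mul hp2 hn1 with hnp | hβ1
    · exact hnp ▸ hp
    have hπp : π = α * star β * p := by
      rw [hπα, hpβ, mul_assoc α, ← mul_assoc (star β), star_mul_self_eq_one hβ hβ1, one_mul]
    exact absurd (hπp ▸ hprime)
      (not_isPrimeH_mul_natCast (subring.mul_mem hα (star_mem hβ)) hp.ne_one)
  · have hbezout : star δ * μ * π + star δ * ν * p = 1 := by
      rw [mul_assoc, mul_assoc, ← mul_add,
        star_mul_self_eq_one hδ ((isUnitH_iff_normNat_eq_one hδ).mp hδu)]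
    obtain ⟨g, hg, hπg⟩ := exists_eq_mul_natCast_of_mul_add_mul_eq_one hπ
      (subring.mul_mem (star_mem hδ) hμ) (subring.mul_mem (star_mem hδ) hν) hpn hbezout
    exact absurd (hπg ▸ hprime) (not_isPrimeH_mul_natCast hg hp.ne_one)

end H122

/-- An element `π ∈ H₍₁,₂,₂₎` is a prime of `H₍₁,₂,₂₎` iff its norm is a rational prime. -/
theorem isPrimeH_iff_norm_prime (π : ℍ[ℝ]) (hπ : π ∈ H122) :
    IsPrimeH π ↔ ∃ p : ℕ, p.Prime ∧ π * star π = (p : ℍ[ℝ]) := by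
  rw [H122.mul_star_eq_normNat hπ]
  simp only [H122.natCast_inj, exists_eq_right']
  exact ⟨H122.prime_normNat_of_isPrimeH, H122.isPrimeH_of_prime_normNat hπ⟩
end
end

section
/- Let m be an odd positive integer. The number of quadruples (q₁, q₂, q₃, q₄) ∈ (ℤ/mℤ)⁴ such that q₁² + q₂² + 2q₃² + 2q₄² = 1 in ℤ/mℤ equals m³ · ∏_{p ∣ m} (1 − 1/p²), where the product runs over the distinct primes p dividing m. -/
/-!
By the Chinese remainder theorem the count is multiplicative in `m`, so it suffices to treat
`m = p ^ k` with `p` an odd prime.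

Over `𝔽_p` write the form as `(x² + y²) + 2 (z² + w²)`. With `χ` the quadratic character and
`ε = χ(-1)`, the equation `x² + y² = s` has `∑_t (1 + χ t)(1 + χ (s - t)) = p + J(s)` solutions,
where the Jacobi sum `J(s)` is `-ε` for `s ≠ 0` and `ε (p - 1)` for `s = 0`. Convolving the two
halves gives `p (p - ε)² + 2 ε p (p - ε) = p³ - p` points.

A solution modulo `p ^ k` (`k ≥ 1`) lifts to exactly `p³` solutions modulo `p ^ (k + 1)`: some
lift exists, since rescaling any lift `x` by `1 - (N(x) - 1) / 2` corrects its norm, and the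
kernel `I` of the reduction satisfies `I² = 0`, so on a fibre `x + I⁴` the norm is
`N(x + e) = N(x) + B(x, e)` with `B` the polar form. The fibre is therefore a coset of the kernel
of `e ↦ B(x, e)` on `I⁴`, and this map is onto `I` because `B(x, x) = 2 N(x) = 2` is a unit.
-/

open Function

theorem Nat.card_eq_mul_card_of_card_fiber {X Y : Type*} [Finite X] [Finite Y] (g : X → Y)
    {n : ℕ} (h : ∀ y, Nat.card {x // g x = y} = n) : Nat.card X = n * Nat.card Y := by
  have := Fintype.ofFinite Y
  rw [← Nat.card_congr (Equiv.sigmaFiberEquiv g), Nat.card_sigma]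
  simp [h, Nat.card_eq_fintype_card, mul_comm]

theorem Nat.card_add_eq_sum {X Y R : Type*} [Finite X] [Finite Y] [AddCommGroup R] [Fintype R]
    (g : X → R) (h : Y → R) (c : R) :
    Nat.card {p : X × Y // g p.1 + h p.2 = c} =
      ∑ s, Nat.card {x // g x = s} * Nat.card {y // h y = c - s} := by
  let e : {p : X × Y // g p.1 + h p.2 = c} ≃ Σ s, {x // g x = s} × {y // h y = c - s} :=
    { toFun := fun p => ⟨g p.1.1, ⟨p.1.1, rfl⟩, ⟨p.1.2, eq_sub_of_add_eq' p.2⟩⟩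
      invFun := fun ⟨_, x, y⟩ => ⟨(x, y), by rw [x.2, y.2]; abel⟩
      left_inv := fun _ => rfl
      right_inv := by rintro ⟨s, ⟨x, rfl⟩, y⟩; rfl }
  simp only [Nat.card_congr e, Nat.card_sigma, Nat.card_prod]

theorem AddMonoidHom.card_ker_mul_card_range {G H : Type*} [AddGroup G] [AddGroup H]
    (L : G →+ H) : Nat.card L.ker * Nat.card L.range = Nat.card G := by
  rw [← L.ker.card_mul_index, AddSubgroup.index_ker]

theorem AddMonoidHom.card_ker_mul_card_of_surjective {G H : Type*} [AddGroup G] [AddGroup H]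
    {L : G →+ H} (hL : Surjective L) : Nat.card L.ker * Nat.card H = Nat.card G := by
  rw [← L.card_ker_mul_card_range, L.range_eq_top.2 hL, AddSubgroup.card_top]

section QuatNorm

variable {R S : Type*} [CommRing R] [CommRing S]

def quatNorm (q : R × R × R × R) : R :=
  q.1 ^ 2 + q.2.1 ^ 2 + 2 * q.2.2.1 ^ 2 + 2 * q.2.2.2 ^ 2

variable (R) in
noncomputable def normOneCount : ℕ := Nat.card {q : R × R × R × R // quatNorm q = 1}

def quatPolar (x : R × R × R × R) : (R × R × R × R) →ₗ[R] R where
  toFun e := 2 * (x.1 * e.1 + x.2.1 * e.2.1 + 2 * x.2.2.1 * e.2.2.1 + 2 * x.2.2.2 * e.2.2.2)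
  map_add' e e' := by simp only [Prod.fst_add, Prod.snd_add]; ring
  map_smul' t e := by simp only [Prod.smul_fst, Prod.smul_snd, smul_eq_mul, RingHom.id_apply]; ring

theorem quatNorm_add (x e : R × R × R × R) :
    quatNorm (x + e) = quatNorm x + quatPolar x e + quatNorm e := by
  simp only [quatNorm, quatPolar, LinearMap.coe_mk, AddHom.coe_mk, Prod.fst_add, Prod.snd_add]
  ring

theorem quatPolar_self (x : R × R × R × R) : quatPolar x x = 2 * quatNorm x := by
  simp only [quatNorm, quatPolar, LinearMap.coe_mk, AddHom.coe_mk]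
  ring

theorem quatNorm_smul (t : R) (x : R × R × R × R) : quatNorm (t • x) = t ^ 2 * quatNorm x := by
  simp only [quatNorm, Prod.smul_fst, Prod.smul_snd, smul_eq_mul]
  ring

def tupleMap (f : R →+* S) : R × R × R × R →+* S × S × S × S :=
  f.prodMap (f.prodMap (f.prodMap f))

theorem tupleMap_apply (f : R →+* S) (x : R × R × R × R) :
    tupleMap f x = (f x.1, f x.2.1, f x.2.2.1, f x.2.2.2) := rfl

theorem quatNorm_tupleMap (f : R →+* S) (x : R × R × R × R) :
    quatNorm (tupleMap f x) = f (quatNorm x) := by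
  simp only [quatNorm, tupleMap_apply, map_add, map_mul, map_pow, map_ofNat]

theorem tupleMap_surjective {f : R →+* S} (hf : Surjective f) : Surjective (tupleMap f) :=
  fun y => ⟨(surjInv hf y.1, surjInv hf y.2.1, surjInv hf y.2.2.1, surjInv hf y.2.2.2), by
    simp [tupleMap_apply, surjInv_eq hf]⟩

end QuatNorm

section Count

variable {R S : Type*} [CommRing R] [CommRing S]

theorem normOneCount_congr (e : R ≃+* S) : normOneCount R = normOneCount S :=
  Nat.card_congr <| (e.prodCongr (e.prodCongr (e.prodCongr e))).toEquiv.subtypeEquiv fun x => by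
    change _ ↔ quatNorm (tupleMap (e : R →+* S) x) = 1
    rw [quatNorm_tupleMap, RingHom.coe_coe, map_eq_one_iff e e.injective]

theorem normOneCount_prod : normOneCount (R × S) = normOneCount R * normOneCount S := by
  let E : (R × S) × (R × S) × (R × S) × (R × S) ≃ (R × R × R × R) × (S × S × S × S) :=
    { toFun := fun x => (tupleMap (RingHom.fst R S) x, tupleMap (RingHom.snd R S) x)
      invFun := fun p => ((p.1.1, p.2.1), (p.1.2.1, p.2.2.1), (p.1.2.2.1, p.2.2.2.1),
        (p.1.2.2.2, p.2.2.2.2))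
      left_inv := fun _ => rfl
      right_inv := fun _ => rfl }
  rw [normOneCount, normOneCount, normOneCount, ← Nat.card_prod]
  refine Nat.card_congr ((E.subtypeEquiv fun x => ?_).trans (Equiv.subtypeProdEquivProd))
  change _ ↔ quatNorm (tupleMap (RingHom.fst R S) x) = 1 ∧
    quatNorm (tupleMap (RingHom.snd R S) x) = 1
  rw [quatNorm_tupleMap, quatNorm_tupleMap, Prod.ext_iff]
  rfl

end Count

section Lifting

variable {A B : Type*} [CommRing A] [CommRing B] {f : A →+* B}

theorem card_ker_tupleMap [Finite A] (hf : Surjective f) :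
    Nat.card (tupleMap f).toAddMonoidHom.ker = Nat.card (RingHom.ker f) ^ 4 := by
  have := Finite.of_surjective f hf
  have hK := AddMonoidHom.card_ker_mul_card_of_surjective (L := f.toAddMonoidHom) hf
  have h4 := AddMonoidHom.card_ker_mul_card_of_surjective
    (L := (tupleMap f).toAddMonoidHom) (tupleMap_surjective hf)
  simp only [Nat.card_prod] at h4
  refine Nat.eq_of_mul_eq_mul_right (pow_pos Nat.card_pos 4 : 0 < Nat.card B ^ 4) ?_
  rw [← mul_pow]
  change _ = (Nat.card f.toAddMonoidHom.ker * _) ^ 4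
  rw [hK]
  convert h4 using 1 <;> ring

theorem quatNorm_eq_zero_of_tupleMap_eq_zero (hker : ∀ a b, f a = 0 → f b = 0 → a * b = 0)
    {e : A × A × A × A} (he : tupleMap f e = 0) :
    quatNorm e = 0 := by
  simp only [tupleMap_apply, Prod.ext_iff, Prod.fst_zero, Prod.snd_zero] at he
  obtain ⟨h1, h2, h3, h4⟩ := he
  simp only [quatNorm, sq, hker _ _ h1 h1, hker _ _ h2 h2, hker _ _ h3 h3, hker _ _ h4 h4]
  ring

theorem exists_tupleMap_eq_of_quatNorm_eq_one (hker : ∀ a b, f a = 0 → f b = 0 → a * b = 0)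
    (hf : Surjective f) (h2 : IsUnit (2 : A))
    {y : B × B × B × B} (hy : quatNorm y = 1) : ∃ x, tupleMap f x = y ∧ quatNorm x = 1 := by
  obtain ⟨x, rfl⟩ := tupleMap_surjective hf y
  set u := h2.unit⁻¹ * (quatNorm x - 1) with hu_def
  have hu : 2 * u = quatNorm x - 1 := by rw [hu_def, ← mul_assoc, IsUnit.mul_val_inv, one_mul]
  have hfu : f u = 0 := by
    rw [hu_def, map_mul, map_sub, ← quatNorm_tupleMap, hy, map_one, sub_self, mul_zero]
  -- `(1 - u)² (1 + 2u) = 1` because `u² = 0`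
  refine ⟨(1 - u) • x, ?_, ?_⟩
  · simp [tupleMap_apply, hfu]
  · rw [quatNorm_smul]
    linear_combination (1 - u) ^ 2 * hu.symm + (2 * u - 3) * hker u u hfu hfu

variable (f) in
def quatPolarOnKer (x₀ : A × A × A × A) : (tupleMap f).toAddMonoidHom.ker →+ A :=
  (quatPolar x₀).toAddMonoidHom.comp (AddSubgroup.subtype _)

theorem card_fiber_quatNorm_eq_one (hker : ∀ a b, f a = 0 → f b = 0 → a * b = 0)
    {x₀ : A × A × A × A} (hx₀ : quatNorm x₀ = 1) :
    Nat.card {x : {x : A × A × A × A // quatNorm x = 1} // tupleMap f x = tupleMap f x₀} =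
      Nat.card (quatPolarOnKer f x₀).ker := by
  refine Nat.card_congr
    { toFun := fun x => ⟨⟨x.1.1 - x₀, ?_⟩, ?_⟩
      invFun := fun e => ⟨⟨x₀ + e.1.1, ?_⟩, ?_⟩
      left_inv := fun x => by simp
      right_inv := fun e => Subtype.ext (Subtype.ext (by simp)) }
  · change tupleMap f (x.1.1 - x₀) = 0
    rw [map_sub, x.2, sub_self]
  · have hker_x : tupleMap f (x.1.1 - x₀) = 0 := by rw [map_sub, x.2, sub_self]
    have h := quatNorm_add x₀ (x.1.1 - x₀)
    rw [add_sub_cancel, x.1.2, hx₀, quatNorm_eq_zero_of_tupleMap_eq_zero hker hker_x] at h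
    change quatPolar x₀ (x.1.1 - x₀) = 0
    linear_combination -h
  · have he : tupleMap f e.1 = 0 := e.1.2
    have hP : quatPolar x₀ e.1 = 0 := e.2
    rw [quatNorm_add, hx₀, hP, quatNorm_eq_zero_of_tupleMap_eq_zero hker he, add_zero, add_zero]
  · have he : tupleMap f e.1 = 0 := e.1.2
    rw [map_add, he, add_zero]

theorem range_quatPolarOnKer (h2 : IsUnit (2 : A)) {x₀ : A × A × A × A} (hx₀ : quatNorm x₀ = 1) :
    (quatPolarOnKer f x₀).range = f.toAddMonoidHom.ker := by
  ext c
  constructor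
  · rintro ⟨⟨e, he⟩, rfl⟩
    replace he : tupleMap f e = 0 := he
    simp only [tupleMap_apply, Prod.ext_iff, Prod.fst_zero, Prod.snd_zero] at he
    change f (quatPolar x₀ e) = 0
    simp [quatPolar, he]
  · intro hc
    replace hc : f c = 0 := hc
    have ht : f (h2.unit⁻¹ * c) = 0 := by rw [map_mul, hc, mul_zero]
    refine ⟨⟨(h2.unit⁻¹ * c : A) • x₀, ?_⟩, ?_⟩
    · change tupleMap f _ = 0
      simp [tupleMap_apply, ht]
    · change quatPolar x₀ ((h2.unit⁻¹ * c : A) • x₀) = c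
      rw [map_smul, quatPolar_self, hx₀, smul_eq_mul]
      linear_combination c * h2.val_inv_mul

theorem normOneCount_eq_card_ker_pow_mul [Finite A] (hf : Surjective f)
    (hker : ∀ a b, f a = 0 → f b = 0 → a * b = 0) (h2 : IsUnit (2 : A)) :
    normOneCount A = Nat.card (RingHom.ker f) ^ 3 * normOneCount B := by
  have := Finite.of_surjective f hf
  let G : {x : A × A × A × A // quatNorm x = 1} → {y : B × B × B × B // quatNorm y = 1} :=
    fun x => ⟨tupleMap f x, by rw [quatNorm_tupleMap, x.2, map_one]⟩
  refine Nat.card_eq_mul_card_of_card_fiber G fun y => ?_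
  obtain ⟨x₀, hx₀y, hx₀⟩ := exists_tupleMap_eq_of_quatNorm_eq_one hker hf h2 y.2
  have hfiber : Nat.card {x // G x = y} = Nat.card (quatPolarOnKer f x₀).ker := by
    rw [← card_fiber_quatNorm_eq_one hker hx₀, hx₀y]
    exact Nat.card_congr (Equiv.subtypeEquivRight fun x => Subtype.ext_iff)
  have hD := (quatPolarOnKer f x₀).card_ker_mul_card_range
  rw [range_quatPolarOnKer h2 hx₀, card_ker_tupleMap hf] at hD
  rw [hfiber]
  exact Nat.eq_of_mul_eq_mul_right Nat.card_pos (hD.trans (pow_succ _ 3))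

end Lifting

section FiniteField

variable {F : Type*} [Field F] [Fintype F] [DecidableEq F]

local notation "χ" => quadraticChar F

theorem quadraticChar_sum_mul_sub (hF : ringChar F ≠ 2) (s : F) :
    ∑ t, χ t * χ (s - t) = if s = 0 then χ (-1) * (Fintype.card F - 1) else -χ (-1) := by
  split_ifs with hs
  · subst hs
    have hsq : ∀ t : F, χ t ^ 2 = 1 - if t = 0 then 1 else 0 := fun t => by
      split_ifs with ht
      · simp [ht]
      · rw [quadraticChar_sq_one ht, sub_zero]
    calc ∑ t, χ t * χ (0 - t) = ∑ t, χ (-1) * χ t ^ 2 := by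
          refine Finset.sum_congr rfl fun t _ => ?_
          rw [zero_sub, neg_eq_neg_one_mul, map_mul]
          ring
      _ = χ (-1) * (Fintype.card F - 1) := by
          rw [← Finset.mul_sum, Finset.sum_congr rfl fun t _ => hsq t, Finset.sum_sub_distrib]
          simp
  · have hJ : jacobiSum χ χ = -χ (-1) := by
      simpa [(quadraticChar_isQuadratic F).inv] using
        jacobiSum_nontrivial_inv (quadraticChar_ne_one hF)
    calc ∑ t, χ t * χ (s - t) = ∑ u, χ (s * u) * χ (s - s * u) :=
          (Fintype.sum_equiv (Equiv.mulLeft₀ s hs) _ _ fun _ => rfl).symm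
      _ = ∑ u, χ s ^ 2 * (χ u * χ (1 - u)) := by
          refine Finset.sum_congr rfl fun u _ => ?_
          rw [← mul_one_sub, map_mul, map_mul]
          ring
      _ = -χ (-1) := by rw [← Finset.mul_sum, quadraticChar_sq_one hs, one_mul, ← hJ, jacobiSum]

theorem card_sq_eq (hF : ringChar F ≠ 2) (a : F) :
    (Nat.card {x : F // x ^ 2 = a} : ℤ) = χ a + 1 := by
  rw [← quadraticChar_card_sqrts hF a, ← Nat.card_eq_card_toFinset]
  rfl

theorem card_sq_add_sq_eq (hF : ringChar F ≠ 2) (s : F) :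
    (Nat.card {p : F × F // p.1 ^ 2 + p.2 ^ 2 = s} : ℤ) =
      Fintype.card F - χ (-1) + if s = 0 then χ (-1) * Fintype.card F else 0 := by
  have hshift : ∑ t, χ (s - t) = 0 :=
    (Fintype.sum_equiv (Equiv.subLeft s) _ _ fun _ => rfl).trans (quadraticChar_sum_zero hF)
  rw [Nat.card_add_eq_sum (· ^ 2) (· ^ 2) s, Nat.cast_sum]
  simp only [Nat.cast_mul, card_sq_eq hF, add_mul, mul_add, one_mul, mul_one,
    Finset.sum_add_distrib, quadraticChar_sum_mul_sub hF, quadraticChar_sum_zero hF, hshift]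
  split_ifs <;> simp <;> ring

theorem normOneCount_of_ringChar_ne_two (hF : ringChar F ≠ 2) :
    (normOneCount F : ℤ) = Fintype.card F ^ 3 - Fintype.card F := by
  have h2 : (2 : F) ≠ 0 := Ring.two_ne_zero hF
  have hsplit : normOneCount F = Nat.card {p : (F × F) × (F × F) //
      (p.1.1 ^ 2 + p.1.2 ^ 2) + 2 * (p.2.1 ^ 2 + p.2.2 ^ 2) = 1} :=
    Nat.card_congr <| (Equiv.prodAssoc F F (F × F)).symm.subtypeEquiv fun q => by
      simp only [quatNorm, Equiv.prodAssoc_symm_apply]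
      ring_nf
  have hhalf (t : F) : Nat.card {p : F × F // 2 * (p.1 ^ 2 + p.2 ^ 2) = t} =
      Nat.card {p : F × F // p.1 ^ 2 + p.2 ^ 2 = t / 2} :=
    Nat.card_congr <| Equiv.subtypeEquivRight fun p => by rw [eq_div_iff h2, mul_comm]
  have hε : χ (-1) ^ 2 = 1 := quadraticChar_sq_one (neg_ne_zero.2 one_ne_zero)
  rw [hsplit, Nat.card_add_eq_sum (fun p : F × F => p.1 ^ 2 + p.2 ^ 2)
    (fun p : F × F => 2 * (p.1 ^ 2 + p.2 ^ 2)) 1]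
  have hone (s : F) : (1 - s) / 2 = 0 ↔ s = 1 := by
    rw [div_eq_zero_iff, sub_eq_zero, eq_comm]
    simp [h2]
  simp only [hhalf, Nat.cast_sum, Nat.cast_mul, card_sq_add_sq_eq hF, hone]
  simp only [mul_add, add_mul, ite_mul, zero_mul, mul_ite, mul_zero, Finset.sum_add_distrib,
    Finset.sum_ite_eq', Finset.mem_univ, if_true, one_ne_zero, if_false, add_zero, Finset.sum_const,
    Finset.card_univ, nsmul_eq_mul]
  linear_combination (-(Fintype.card F : ℤ)) * hε

end FiniteField

section ZMod

variable {p : ℕ} [hp : Fact p.Prime]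

theorem normOneCount_zmod_pow_succ_succ (hp2 : p ≠ 2) (k : ℕ) :
    normOneCount (ZMod (p ^ (k + 2))) = p ^ 3 * normOneCount (ZMod (p ^ (k + 1))) := by
  let f := ZMod.castHom (pow_dvd_pow p (by omega : k + 1 ≤ k + 2)) (ZMod (p ^ (k + 1)))
  have hf : Surjective f := ZMod.castHom_surjective _
  have hker (a b : ZMod (p ^ (k + 2))) (ha : f a = 0) (hb : f b = 0) : a * b = 0 := by
    rw [ZMod.castHom_apply, ZMod.cast_eq_val, ZMod.natCast_eq_zero_iff] at ha hb
    rw [← ZMod.natCast_zmod_val a, ← ZMod.natCast_zmod_val b, ← Nat.cast_mul,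
      ZMod.natCast_eq_zero_iff]
    exact (pow_dvd_pow p (by omega)).trans ((pow_add p (k + 1) (k + 1)).symm ▸ mul_dvd_mul ha hb)
  have h2 : IsUnit (2 : ZMod (p ^ (k + 2))) := by
    have hcop : Nat.Coprime 2 (p ^ (k + 2)) :=
      Nat.Coprime.pow_right _ ((Nat.coprime_primes Nat.prime_two hp.out).2 hp2.symm)
    exact_mod_cast (ZMod.isUnit_iff_coprime 2 _).2 hcop
  have hcard : Nat.card (RingHom.ker f) = p := by
    have h := AddMonoidHom.card_ker_mul_card_of_surjective (L := f.toAddMonoidHom) hf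
    rw [Nat.card_zmod, Nat.card_zmod] at h
    exact Nat.eq_of_mul_eq_mul_right (pow_pos hp.out.pos _) (h.trans (pow_succ' p (k + 1)))
  rw [normOneCount_eq_card_ker_pow_mul hf hker h2, hcard]

theorem normOneCount_zmod_pow_succ (hp2 : p ≠ 2) (k : ℕ) :
    (normOneCount (ZMod (p ^ (k + 1))) : ℤ) = p ^ (3 * k) * (p ^ 3 - p) := by
  induction k with
  | zero =>
    have hF : ringChar (ZMod p) ≠ 2 := by rwa [ZMod.ringChar_zmod_n]
    rw [zero_add, pow_one, normOneCount_of_ringChar_ne_two hF, ZMod.card]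
    ring
  | succ k ih =>
    rw [normOneCount_zmod_pow_succ_succ hp2, Nat.cast_mul, ih]
    push_cast
    ring

theorem normOneCount_zmod_pow_succ_eq_rat (hp2 : p ≠ 2) (k : ℕ) :
    (normOneCount (ZMod (p ^ (k + 1))) : ℚ) =
      ((p ^ (k + 1) : ℕ) : ℚ) ^ 3 * (1 - 1 / (p : ℚ) ^ 2) := by
  rw [← Int.cast_natCast, normOneCount_zmod_pow_succ hp2]
  have : (p : ℚ) ≠ 0 := by exact_mod_cast hp.out.ne_zero
  push_cast
  field_simp
  ring

end ZMod

theorem count_norm_one_vectors_general (m : ℕ) (hm : Odd m) :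
    (Nat.card {q : ZMod m × ZMod m × ZMod m × ZMod m //
        q.1 ^ 2 + q.2.1 ^ 2 + 2 * q.2.2.1 ^ 2 + 2 * q.2.2.2 ^ 2 = 1} : ℚ) =
      m ^ 3 * ∏ p ∈ m.primeFactors, (1 - 1 / (p : ℚ) ^ 2) := by
  change (normOneCount (ZMod m) : ℚ) = _
  induction m using Nat.recOnPosPrimePosCoprime with
  | prime_pow p k hp hk =>
    obtain ⟨k, rfl⟩ := Nat.exists_eq_add_of_le' hk
    have := Fact.mk hp
    have hp2 : p ≠ 2 := by
      rintro rfl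
      exact Nat.not_even_iff_odd.2 hm ((Nat.even_pow' k.succ_ne_zero).2 even_two)
    rw [Nat.primeFactors_prime_pow k.succ_ne_zero hp, Finset.prod_singleton,
      normOneCount_zmod_pow_succ_eq_rat hp2]
  | zero => exact absurd hm (by decide)
  | one =>
    rw [normOneCount, Nat.card_eq_one_iff_unique.2 ⟨inferInstance, ⟨⟨0, Subsingleton.elim _ _⟩⟩⟩]
    simp
  | coprime a b _ _ hab iha ihb =>
    obtain ⟨hoa, hob⟩ := Nat.odd_mul.1 hm
    rw [normOneCount_congr (ZMod.chineseRemainder hab), normOneCount_prod, Nat.cast_mul, iha hoa,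
      ihb hob, Nat.primeFactors_mul (by omega) (by omega),
      Finset.prod_union hab.disjoint_primeFactors]
    push_cast
    ring

/-- For `m` odd and positive, the number of quadruples `(q₁, q₂, q₃, q₄) ∈ (ℤ/mℤ)⁴` with
`q₁² + q₂² + 2q₃² + 2q₄² = 1` in `ℤ/mℤ` equals `m³·∏_{p ∣ m}(1 − 1/p²)`. -/
theorem count_norm_one_vectors (m : ℕ) (hm : Odd m) (hpos : 0 < m) :
    (Nat.card {q : ZMod m × ZMod m × ZMod m × ZMod m //
        q.1 ^ 2 + q.2.1 ^ 2 + 2 * q.2.2.1 ^ 2 + 2 * q.2.2.2 ^ 2 = 1} : ℚ) =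
      m ^ 3 * ∏ p ∈ m.primeFactors, (1 - 1 / (p : ℚ) ^ 2) :=
  count_norm_one_vectors_general m hm
end

section
/- Let b ∈ H₍₁,₂,₂₎ be an odd quaternion. Then there exist units u and u₁ of H₍₁,₂,₂₎ such that b·u − 1 ∈ 2·H₍₁,₂,₂₎ and u₁·b − 1 ∈ 2·H₍₁,₂,₂₎. -/
open Quaternion

noncomputable section

/-!
A norm-one element `w` of the order is a unit with inverse `star w`, so it suffices to find `w`
of norm one with `b ≡ w (mod 2)`: then `u = u₁ = star w` works on both sides, since
`b * star w - 1 = (b - w) * star w` and `star w * b - 1 = star w * (b - w)`. In the coordinates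
of the basis `v₁, …, v₄` this is a statement about the norm form modulo 2, checked on the sixteen
residue classes.
-/

/-- The reduced norm of `a v₁ + b v₂ + c v₃ + d v₄`. -/
def normForm {R : Type*} [CommRing R] (a b c d : R) : R :=
  a * a + b * b + (a + b) * (c + d) + c * c + d * d + c * d

theorem map_normForm {R S : Type*} [CommRing R] [CommRing S] (f : R →+* S) (a b c d : R) :
    f (normForm a b c d) = normForm (f a) (f b) (f c) (f d) := by
  simp only [normForm, map_add, map_mul]

def ofCoords (a b c d : ℤ) : ℍ[ℝ] := a • v₁ + b • v₂ + c • v₃ + d • v₄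

theorem ofCoords_mem_H122 (a b c d : ℤ) : ofCoords a b c d ∈ H122 := ⟨a, b, c, d, rfl⟩

theorem mem_H122_iff {q : ℍ[ℝ]} : q ∈ H122 ↔ ∃ a b c d : ℤ, q = ofCoords a b c d := Iff.rfl

section Components

variable (a b c d : ℤ)

@[simp] theorem re_ofCoords : (ofCoords a b c d).re = a + (c + d) / 2 := by
  simp [ofCoords]; simp [v₁, v₂, v₃, v₄]; ring

@[simp] theorem imI_ofCoords : (ofCoords a b c d).imI = b + (c + d) / 2 := by
  simp [ofCoords]; simp [v₁, v₂, v₃, v₄]; ring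

@[simp] theorem imJ_ofCoords : (ofCoords a b c d).imJ = c * √2 / 2 := by
  simp [ofCoords]; simp [v₁, v₂, v₃, v₄]; ring

@[simp] theorem imK_ofCoords : (ofCoords a b c d).imK = d * √2 / 2 := by
  simp [ofCoords]; simp [v₁, v₂, v₃, v₄]; ring

end Components

theorem ofCoords_mul (a b c d a' b' c' d' : ℤ) :
    ofCoords a b c d * ofCoords a' b' c' d' =
      ofCoords (a * a' - b * b' - b * c' - d * b' - c * c' - d * c' - d * d')
        (a * b' + b * a' + b * d' + c * b' + c * d' - d * c')
        (a * c' + c * a' + d * b' - b * d' + c * c' + d * c')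
        (a * d' + d * a' + b * c' - c * b' + d * c' + d * d') := by
  have hsqrt : √2 * √2 = 2 := Real.mul_self_sqrt zero_le_two
  ext <;> simp only [re_mul, imI_mul, imJ_mul, imK_mul, re_ofCoords, imI_ofCoords, imJ_ofCoords,
    imK_ofCoords] <;> push_cast
  · linear_combination (-(c * c' + d * d' : ℝ) / 4) * hsqrt
  · linear_combination ((c * d' - d * c' : ℝ) / 4) * hsqrt
  · ring
  · ring

theorem star_ofCoords (a b c d : ℤ) :
    star (ofCoords a b c d) = ofCoords (a + c + d) (-b) (-c) (-d) := by
  ext <;> simp <;> ring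

theorem ofCoords_mul_star (a b c d : ℤ) :
    ofCoords a b c d * star (ofCoords a b c d) = (normForm a b c d : ℤ) := by
  rw [star_ofCoords, ofCoords_mul]
  ext <;> simp [normForm] <;> ring

theorem ofCoords_sub (a b c d a' b' c' d' : ℤ) :
    ofCoords a b c d - ofCoords a' b' c' d' = ofCoords (a - a') (b - b') (c - c') (d - d') := by
  simp only [ofCoords, sub_smul]
  abel

theorem ofCoords_two_mul (a b c d : ℤ) :
    ofCoords (2 * a) (2 * b) (2 * c) (2 * d) = 2 * ofCoords a b c d := by
  simp only [ofCoords, two_mul, add_smul]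
  abel

namespace H122

theorem mul_mem {p q : ℍ[ℝ]} (hp : p ∈ H122) (hq : q ∈ H122) : p * q ∈ H122 := by
  obtain ⟨a, b, c, d, rfl⟩ := mem_H122_iff.mp hp
  obtain ⟨a', b', c', d', rfl⟩ := mem_H122_iff.mp hq
  exact (ofCoords_mul a b c d a' b' c' d').symm ▸ ofCoords_mem_H122 _ _ _ _

end H122

/-- One lift of every odd residue class of `H₍₁,₂,₂₎` modulo 2 to an element of norm one. -/
def normOneReps : List (Fin 4 → ℤ) :=
  [![1, 0, 0, 0], ![0, 1, 0, 0], ![0, 0, 1, 0], ![0, 0, 0, 1], ![0, 0, 1, -1], ![0, 1, 0, -1],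
    ![0, 1, -1, 0], ![1, 0, 0, -1], ![1, 0, -1, 0], ![1, 1, 0, -1], ![1, 1, -1, 0], ![1, 1, -1, -1]]

theorem normForm_eq_one_of_mem_normOneReps :
    ∀ w ∈ normOneReps, normForm (w 0) (w 1) (w 2) (w 3) = 1 := by
  decide

theorem exists_mem_normOneReps_of_normForm_eq_one :
    ∀ a b c d : ZMod 2, normForm a b c d = 1 →
      ∃ w ∈ normOneReps,
        (w 0 : ZMod 2) = a ∧ (w 1 : ZMod 2) = b ∧ (w 2 : ZMod 2) = c ∧ (w 3 : ZMod 2) = d := by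
  decide

theorem exists_normForm_eq_one_modEq_of_odd {a b c d : ℤ} (hodd : Odd (normForm a b c d)) :
    ∃ a' b' c' d' : ℤ, normForm a' b' c' d' = 1 ∧
      a ≡ a' [ZMOD 2] ∧ b ≡ b' [ZMOD 2] ∧ c ≡ c' [ZMOD 2] ∧ d ≡ d' [ZMOD 2] := by
  have hmod : normForm (a : ZMod 2) b c d = 1 := by
    simpa using (map_normForm (Int.castRingHom (ZMod 2)) a b c d).symm.trans
      (ZMod.intCast_eq_one_iff_odd.mpr hodd)
  obtain ⟨w, hw, ha, hb, hc, hd⟩ := exists_mem_normOneReps_of_normForm_eq_one _ _ _ _ hmod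
  refine ⟨w 0, w 1, w 2, w 3, normForm_eq_one_of_mem_normOneReps w hw, ?_⟩
  have hcong := fun x y => (ZMod.intCast_eq_intCast_iff x y 2).mp
  exact ⟨hcong _ _ ha.symm, hcong _ _ hb.symm, hcong _ _ hc.symm, hcong _ _ hd.symm⟩

theorem exists_mul_star_eq_one_sub_eq_two_mul {q : ℍ[ℝ]} (hq : q ∈ H122)
    (hodd : ∃ n : ℤ, Odd n ∧ q * star q = n) :
    ∃ w ∈ H122, w * star w = 1 ∧ ∃ h ∈ H122, q - w = 2 * h := by
  obtain ⟨a, b, c, d, rfl⟩ := mem_H122_iff.mp hq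
  obtain ⟨n, hn, hqn⟩ := hodd
  have hnorm : normForm a b c d = n := by
    simpa using congrArg QuaternionAlgebra.re ((ofCoords_mul_star a b c d).symm.trans hqn)
  obtain ⟨a', b', c', d', hw, ha, hb, hc, hd⟩ :=
    exists_normForm_eq_one_modEq_of_odd (hnorm ▸ hn)
  obtain ⟨ka, hka⟩ := ha.symm.dvd
  obtain ⟨kb, hkb⟩ := hb.symm.dvd
  obtain ⟨kc, hkc⟩ := hc.symm.dvd
  obtain ⟨kd, hkd⟩ := hd.symm.dvd
  refine ⟨ofCoords a' b' c' d', ofCoords_mem_H122 _ _ _ _, ?_, ofCoords ka kb kc kd,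
    ofCoords_mem_H122 _ _ _ _, ?_⟩
  · rw [ofCoords_mul_star, hw, Int.cast_one]
  · rw [ofCoords_sub, hka, hkb, hkc, hkd, ofCoords_two_mul]

theorem isUnitH_star {w : ℍ[ℝ]} (hw : w ∈ H122) (hw1 : w * star w = 1) : IsUnitH (star w) :=
  ⟨H122.star_mem hw, w, hw, by rwa [star_comm_self], hw1⟩

/-- For an odd quaternion `b ∈ H₍₁,₂,₂₎` there are units `u, u₁` of `H₍₁,₂,₂₎` with
`b·u ≡ 1 (mod 2)` and `u₁·b ≡ 1 (mod 2)` in `H₍₁,₂,₂₎`. -/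
theorem odd_quaternion_unit_congruence (b : ℍ[ℝ]) (hb : b ∈ H122)
    (hodd : ∃ n : ℤ, Odd n ∧ b * star b = (n : ℍ[ℝ])) :
    (∃ u : ℍ[ℝ], IsUnitH u ∧ ∃ h ∈ H122, b * u - 1 = 2 * h) ∧
    (∃ u₁ : ℍ[ℝ], IsUnitH u₁ ∧ ∃ h ∈ H122, u₁ * b - 1 = 2 * h) := by
  obtain ⟨w, hw, hw1, h, hh, hbw⟩ := exists_mul_star_eq_one_sub_eq_two_mul hb hodd
  have hw1' : star w * w = 1 := by rwa [star_comm_self]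
  refine ⟨⟨star w, isUnitH_star hw hw1, h * star w, H122.mul_mem hh (H122.star_mem hw), ?_⟩,
    ⟨star w, isUnitH_star hw hw1, star w * h, H122.mul_mem (H122.star_mem hw) hh, ?_⟩⟩
  · calc b * star w - 1 = (b - w) * star w := by rw [sub_mul, hw1]
      _ = 2 * (h * star w) := by rw [hbw, mul_assoc]
  · calc star w * b - 1 = star w * (b - w) := by rw [mul_sub, hw1']
      _ = 2 * (star w * h) := by rw [hbw]; noncomm_ring
end
end
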